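/- Under the GSVD setup, assume additionally that σ_1 > σ_2 > … > σ_r (distinct generalized singular values) and that u_{A,i}ᵀ L_M b ≠ 0 for all 1 ≤ i ≤ r. Fix 1 ≤ k ≤ r. Let D ∈ ℝ^{r×r} be the diagonal matrix with entries σ_i · (u_{A,i}ᵀ L_M b), partitioned as D = diag(D_1, D_2) with D_1 ∈ ℝ^{k×k}; let H_k ∈ ℝ^{r×k} have entries (H_k)_{ij} = σ_i^{2(j−1)}, partitioned into its top k rows H_{k1} ∈ ℝ^{k×k} and bottom r−k rows H_{k2} ∈ ℝ^{(r−k)×k}; and let Δ_k = D_2 H_{k2} H_{k1}^{-1} D_1^{-1} ∈ ℝ^{(r−k)×k}. Then, with S_k = span{Z_r D_A^{2i+1} U_{A,r}ᵀ L_M b : 0 ≤ i ≤ k−1} (the k-th gen-GKB solution subspace) and Z_k = span{z_1,…,z_k}, it holds that dist(S_k, Z_k) = ‖Δ_k‖_2 / (1 + ‖Δ_k‖_2²)^{1/2}. -/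

import Mathlib

open Matrix

/-- The spectral (operator 2-) norm of a real matrix. -/
noncomputable def matSpectralNorm {p q : ℕ} (A : Matrix (Fin p) (Fin q) ℝ) : ℝ :=
  ‖LinearMap.toContinuousLinearMap (Matrix.toEuclideanLin A)‖

/-- The maximum canonical angle `Θ(F,G)` between two subspaces of `ℝⁿ` equipped with the
`W`-inner product `⟨x, x'⟩_W = xᵀ W x'` (here `W` plays the role of `N⁻¹`). -/
noncomputable def maxCanonicalAngle {n : ℕ} (W : Matrix (Fin n) (Fin n) ℝ)
    (F G : Submodule ℝ (Fin n → ℝ)) : ℝ :=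
  ⨆ u : {u : Fin n → ℝ // u ∈ F ∧ u ≠ 0},
    ⨅ v : {v : Fin n → ℝ // v ∈ G ∧ v ≠ 0},
      Real.arccos (|u.1 ⬝ᵥ (W *ᵥ v.1)| /
        (Real.sqrt (u.1 ⬝ᵥ (W *ᵥ u.1)) * Real.sqrt (v.1 ⬝ᵥ (W *ᵥ v.1))))

/-- The distance `dist(F,G) = sin Θ(F,G)` between two subspaces. -/
noncomputable def subspaceDist {n : ℕ} (W : Matrix (Fin n) (Fin n) ℝ)
    (F G : Submodule ℝ (Fin n → ℝ)) : ℝ :=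
  Real.sin (maxCanonicalAngle W F G)

/-! The columns of `Z` are `N⁻¹`-orthonormal, so everything can be computed in the coordinates
they provide. There, the `i`-th Krylov vector `Z_r D_A^{2i+1} U_{A,r}ᵀ L_M b` has coordinates
`σ_j^{2i+1} c_j`, so the spanning matrix of `S_k` is `Z_r D V` with `V` the Vandermonde matrix
in the `σ_j²`. Splitting its rows at `k`, it equals `(Z_{top} + Z_{bottom} Δ_k) D₁ H₁`, and
`D₁ H₁` is invertible because the `σ_j` are distinct and positive and the `c_j` are nonzero.
Hence `S_k` is the graph `{(x, Δ_k x)}` over `Z_k = {(x, 0)}`. The best approximation of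
`(x, Δ_k x)` from `Z_k` is `(x, 0)`, at an angle whose cosine is `‖x‖ / √(‖x‖² + ‖Δ_k x‖²)`;
maximizing over `x` gives `tan Θ = ‖Δ_k‖₂`, which is the claim. -/

theorem matSpectralNorm_nonneg {p q : ℕ} (A : Matrix (Fin p) (Fin q) ℝ) :
    0 ≤ matSpectralNorm A :=
  norm_nonneg _

theorem ContinuousLinearMap.exists_norm_eq_one_norm_apply_eq_opNorm {E F : Type*}
    [NormedAddCommGroup E] [NormedSpace ℝ E] [FiniteDimensional ℝ E] [Nontrivial E]
    [NormedAddCommGroup F] [NormedSpace ℝ F] (f : E →L[ℝ] F) :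
    ∃ x, ‖x‖ = 1 ∧ ‖f x‖ = ‖f‖ := by
  obtain ⟨x, hx, hmax⟩ := (isCompact_sphere (0 : E) 1).exists_sSup_image_eq
    (NormedSpace.sphere_nonempty.2 zero_le_one) (continuous_norm.comp f.continuous).continuousOn
  exact ⟨x, by simpa using hx, hmax.symm.trans f.sSup_sphere_eq_norm⟩

theorem dotProduct_self_eq_norm_toLp_sq {ι : Type*} [Fintype ι] (x : ι → ℝ) :
    x ⬝ᵥ x = ‖WithLp.toLp 2 x‖ ^ 2 := by
  rw [EuclideanSpace.real_norm_sq_eq]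
  simp [dotProduct, sq]

theorem mulVec_dotProduct_self_eq_norm_toEuclideanLin_sq {p q : ℕ}
    (A : Matrix (Fin p) (Fin q) ℝ) (x : Fin q → ℝ) :
    (A *ᵥ x) ⬝ᵥ (A *ᵥ x) =
      ‖LinearMap.toContinuousLinearMap (toEuclideanLin A) (WithLp.toLp 2 x)‖ ^ 2 := by
  simp [dotProduct_self_eq_norm_toLp_sq]

theorem mulVec_dotProduct_self_le_matSpectralNorm_sq {p q : ℕ} (A : Matrix (Fin p) (Fin q) ℝ)
    (x : Fin q → ℝ) : (A *ᵥ x) ⬝ᵥ (A *ᵥ x) ≤ matSpectralNorm A ^ 2 * (x ⬝ᵥ x) := by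
  rw [mulVec_dotProduct_self_eq_norm_toEuclideanLin_sq, dotProduct_self_eq_norm_toLp_sq,
    ← mul_pow]
  gcongr
  exact ContinuousLinearMap.le_opNorm _ _

theorem exists_dotProduct_self_eq_one_mulVec_eq_matSpectralNorm_sq {p q : ℕ} [NeZero q]
    (A : Matrix (Fin p) (Fin q) ℝ) :
    ∃ x : Fin q → ℝ, x ⬝ᵥ x = 1 ∧ (A *ᵥ x) ⬝ᵥ (A *ᵥ x) = matSpectralNorm A ^ 2 := by
  obtain ⟨x, hx, hAx⟩ :=
    (LinearMap.toContinuousLinearMap (toEuclideanLin A)).exists_norm_eq_one_norm_apply_eq_opNorm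
  refine ⟨x.ofLp, by simp [dotProduct_self_eq_norm_toLp_sq, hx], ?_⟩
  rw [mulVec_dotProduct_self_eq_norm_toEuclideanLin_sq, WithLp.toLp_ofLp, hAx, matSpectralNorm]

theorem dotProduct_self_nonneg {ι : Type*} [Fintype ι] (x : ι → ℝ) : 0 ≤ x ⬝ᵥ x :=
  Finset.sum_nonneg fun i _ => mul_self_nonneg (x i)

theorem dotProduct_self_pos_of_ne_zero {ι : Type*} [Fintype ι] {x : ι → ℝ} (hx : x ≠ 0) :
    0 < x ⬝ᵥ x :=
  (dotProduct_self_nonneg x).lt_of_ne' (dotProduct_self_eq_zero.not.2 hx)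

theorem sq_dotProduct_le {ι : Type*} [Fintype ι] (x y : ι → ℝ) :
    (x ⬝ᵥ y) ^ 2 ≤ (x ⬝ᵥ x) * (y ⬝ᵥ y) := by
  simpa [dotProduct, sq] using Finset.sum_mul_sq_le_sq_mul_sq Finset.univ x y

theorem mulVec_dotProduct_mulVec_mulVec_of_transpose_mul_mul_eq_one {ι n : Type*} [Fintype ι]
    [DecidableEq ι] [Fintype n] {W : Matrix n n ℝ} {Y : Matrix n ι ℝ} (hY : Yᵀ * W * Y = 1)
    (v v' : ι → ℝ) : (Y *ᵥ v) ⬝ᵥ (W *ᵥ (Y *ᵥ v')) = v ⬝ᵥ v' := by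
  rw [← vecMul_transpose, ← dotProduct_mulVec, mulVec_mulVec, mulVec_mulVec, hY, one_mulVec]

theorem inv_sqrt_one_add_sq_le_div {q d t : ℝ} (hq : 0 < q) (hd : 0 ≤ d) (hdq : d ≤ t ^ 2 * q) :
    (√(1 + t ^ 2))⁻¹ ≤ |q| / (√(q + d) * √q) := by
  rw [abs_of_pos hq, inv_eq_one_div, div_le_div_iff₀ (by positivity) (by positivity), one_mul]
  calc √(q + d) * √q ≤ √((1 + t ^ 2) * q) * √q := by gcongr; linarith
    _ = q * √(1 + t ^ 2) := by
      rw [Real.sqrt_mul (by positivity), mul_assoc, Real.mul_self_sqrt hq.le, mul_comm]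

theorem div_mul_le_inv_of_le {a r s : ℝ} (har : a ≤ r) (hr : 0 < r) (hs : 0 < s) :
    a / (s * r) ≤ s⁻¹ := by
  rw [div_le_iff₀ (by positivity), inv_mul_cancel_left₀ hs.ne']
  exact har

noncomputable def formAngle {n : ℕ} (W : Matrix (Fin n) (Fin n) ℝ) (u v : Fin n → ℝ) : ℝ :=
  Real.arccos (|u ⬝ᵥ (W *ᵥ v)| / (√(u ⬝ᵥ (W *ᵥ u)) * √(v ⬝ᵥ (W *ᵥ v))))

theorem maxCanonicalAngle_eq_iSup_iInf_formAngle {n : ℕ} (W : Matrix (Fin n) (Fin n) ℝ)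
    (F G : Submodule ℝ (Fin n → ℝ)) :
    maxCanonicalAngle W F G =
      ⨆ u : {u // u ∈ F ∧ u ≠ 0}, ⨅ v : {v // v ∈ G ∧ v ≠ 0}, formAngle W u.1 v.1 :=
  rfl

theorem maxCanonicalAngle_eq_of_bounds {n : ℕ} {W : Matrix (Fin n) (Fin n) ℝ}
    {F G : Submodule ℝ (Fin n → ℝ)} {θ : ℝ}
    (hle : ∀ u ∈ F, u ≠ 0 → ∃ v ∈ G, v ≠ 0 ∧ formAngle W u v ≤ θ)
    (hge : ∃ u ∈ F, u ≠ 0 ∧ ∀ v ∈ G, v ≠ 0 → θ ≤ formAngle W u v) :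
    maxCanonicalAngle W F G = θ := by
  obtain ⟨u₀, hu₀F, hu₀, hθ⟩ := hge
  obtain ⟨v₀, hv₀G, hv₀, -⟩ := hle u₀ hu₀F hu₀
  have : Nonempty {u // u ∈ F ∧ u ≠ 0} := ⟨⟨u₀, hu₀F, hu₀⟩⟩
  have : Nonempty {v // v ∈ G ∧ v ≠ 0} := ⟨⟨v₀, hv₀G, hv₀⟩⟩
  have hbdd (u : Fin n → ℝ) :
      BddBelow (Set.range fun v : {v // v ∈ G ∧ v ≠ 0} => formAngle W u v) :=
    ⟨0, by rintro _ ⟨v, rfl⟩; exact Real.arccos_nonneg _⟩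
  rw [maxCanonicalAngle_eq_iSup_iInf_formAngle]
  apply le_antisymm
  · refine ciSup_le fun u => ?_
    obtain ⟨v, hvG, hv, hvθ⟩ := hle u.1 u.2.1 u.2.2
    exact (ciInf_le (hbdd u.1) ⟨v, hvG, hv⟩).trans hvθ
  · have hbdd' : BddAbove (Set.range fun u : {u // u ∈ F ∧ u ≠ 0} =>
        ⨅ v : {v // v ∈ G ∧ v ≠ 0}, formAngle W u.1 v.1) :=
      ⟨Real.pi, by
        rintro _ ⟨u, rfl⟩
        exact (ciInf_le (hbdd u.1) ⟨v₀, hv₀G, hv₀⟩).trans (Real.arccos_le_pi _)⟩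
    refine le_trans ?_ (le_ciSup hbdd' ⟨u₀, hu₀F, hu₀⟩)
    exact le_ciInf fun v => hθ v.1 v.2.1 v.2.2

section GraphSubspace

variable {n k l : ℕ} {W : Matrix (Fin n) (Fin n) ℝ} {Y : Matrix (Fin n) (Fin k ⊕ Fin l) ℝ}

theorem toCols_add_mul_mulVec_dotProduct (hY : Yᵀ * W * Y = 1)
    (Δ Δ' : Matrix (Fin l) (Fin k) ℝ) (x y : Fin k → ℝ) :
    ((Y.toCols₁ + Y.toCols₂ * Δ) *ᵥ x) ⬝ᵥ (W *ᵥ ((Y.toCols₁ + Y.toCols₂ * Δ') *ᵥ y)) =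
      x ⬝ᵥ y + (Δ *ᵥ x) ⬝ᵥ (Δ' *ᵥ y) := by
  have hgraph (Δ : Matrix (Fin l) (Fin k) ℝ) (x : Fin k → ℝ) :
      (Y.toCols₁ + Y.toCols₂ * Δ) *ᵥ x = Y *ᵥ Sum.elim x (Δ *ᵥ x) := by
    conv_rhs => rw [← fromCols_toCols Y]
    rw [fromCols_mulVec_sumElim, add_mulVec, mulVec_mulVec]
  rw [hgraph, hgraph, mulVec_dotProduct_mulVec_mulVec_of_transpose_mul_mul_eq_one hY,
    sumElim_dotProduct_sumElim]

theorem toCols_add_mul_mulVec_ne_zero (hY : Yᵀ * W * Y = 1) (Δ : Matrix (Fin l) (Fin k) ℝ)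
    {x : Fin k → ℝ} (hx : x ≠ 0) : (Y.toCols₁ + Y.toCols₂ * Δ) *ᵥ x ≠ 0 := by
  intro h
  have hq := toCols_add_mul_mulVec_dotProduct hY Δ Δ x x
  rw [h, zero_dotProduct] at hq
  have : x ⬝ᵥ x = 0 := by
    linarith [dotProduct_self_nonneg x, dotProduct_self_nonneg (Δ *ᵥ x)]
  exact hx (dotProduct_self_eq_zero.1 this)

theorem formAngle_toCols_add_mul_mulVec (hY : Yᵀ * W * Y = 1)
    (Δ : Matrix (Fin l) (Fin k) ℝ) (x y : Fin k → ℝ) :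
    formAngle W ((Y.toCols₁ + Y.toCols₂ * Δ) *ᵥ x) (Y.toCols₁ *ᵥ y) =
      Real.arccos (|x ⬝ᵥ y| / (√(x ⬝ᵥ x + (Δ *ᵥ x) ⬝ᵥ (Δ *ᵥ x)) * √(y ⬝ᵥ y))) := by
  have hY₁ : Y.toCols₁ *ᵥ y = (Y.toCols₁ + Y.toCols₂ * (0 : Matrix (Fin l) (Fin k) ℝ)) *ᵥ y := by
    simp
  rw [formAngle, hY₁, toCols_add_mul_mulVec_dotProduct hY, toCols_add_mul_mulVec_dotProduct hY,
    toCols_add_mul_mulVec_dotProduct hY]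
  simp

theorem maxCanonicalAngle_range_toCols_add_mul [NeZero k] (hY : Yᵀ * W * Y = 1)
    (Δ : Matrix (Fin l) (Fin k) ℝ) :
    maxCanonicalAngle W (LinearMap.range (Y.toCols₁ + Y.toCols₂ * Δ).mulVecLin)
      (LinearMap.range Y.toCols₁.mulVecLin) = Real.arctan (matSpectralNorm Δ) := by
  rw [Real.arctan_eq_arccos (matSpectralNorm_nonneg Δ)]
  apply maxCanonicalAngle_eq_of_bounds
  · rintro _ ⟨x, rfl⟩ hu
    have hx : x ≠ 0 := by rintro rfl; simp at hu
    refine ⟨Y.toCols₁ *ᵥ x, ⟨x, rfl⟩, by simpa using toCols_add_mul_mulVec_ne_zero hY 0 hx, ?_⟩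
    rw [mulVecLin_apply, formAngle_toCols_add_mul_mulVec hY]
    exact Real.antitone_arccos <| inv_sqrt_one_add_sq_le_div (dotProduct_self_pos_of_ne_zero hx)
      (dotProduct_self_nonneg _) (mulVec_dotProduct_self_le_matSpectralNorm_sq Δ x)
  · obtain ⟨x₀, hx₀, hΔx₀⟩ := exists_dotProduct_self_eq_one_mulVec_eq_matSpectralNorm_sq Δ
    have hx₀' : x₀ ≠ 0 := by rintro rfl; simp at hx₀
    refine ⟨_, ⟨x₀, rfl⟩, toCols_add_mul_mulVec_ne_zero hY Δ hx₀', ?_⟩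
    rintro _ ⟨y, rfl⟩ hy
    have hy' : y ≠ 0 := by rintro rfl; simp at hy
    have hCS : |x₀ ⬝ᵥ y| ≤ √(y ⬝ᵥ y) :=
      Real.abs_le_sqrt (by simpa [hx₀] using sq_dotProduct_le x₀ y)
    rw [mulVecLin_apply, mulVecLin_apply, formAngle_toCols_add_mul_mulVec hY, hx₀, hΔx₀]
    exact Real.antitone_arccos <| div_mul_le_inv_of_le hCS
      (Real.sqrt_pos.2 (dotProduct_self_pos_of_ne_zero hy')) (by positivity)

end GraphSubspace

theorem transpose_submatrix_mul_mul_submatrix_eq_one {m ι : Type*} [Fintype m] [Fintype ι]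
    [DecidableEq m] [DecidableEq ι] {W Z : Matrix m m ℝ} (hZ : Zᵀ * W * Z = 1) {e : ι → m}
    (he : Function.Injective e) : (Z.submatrix id e)ᵀ * W * Z.submatrix id e = 1 := by
  rw [transpose_submatrix, ← submatrix_id_id W, ← submatrix_mul _ _ _ _ _ Function.bijective_id,
    ← submatrix_mul _ _ _ _ _ Function.bijective_id, hZ, submatrix_one _ he]

theorem range_mulVecLin_mul_of_isUnit {R m n : Type*} [CommRing R] [Fintype n] [DecidableEq n]
    (A : Matrix m n R) {B : Matrix n n R} (hB : IsUnit B) :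
    LinearMap.range (A * B).mulVecLin = LinearMap.range A.mulVecLin := by
  rw [mulVecLin_mul, LinearMap.range_comp_of_range_eq_top]
  exact LinearMap.range_eq_top.2 (mulVec_surjective_iff_isUnit.2 hB)

theorem range_mulVecLin_mul_fromRows {R m k l : Type*} [CommRing R] [Fintype k] [DecidableEq k]
    [Fintype l] (Y : Matrix m (k ⊕ l) R) {B₁ : Matrix k k R} {B₂ : Matrix l k R}
    {Δ : Matrix l k R} (hB₁ : IsUnit B₁) (hΔ : Δ * B₁ = B₂) :
    LinearMap.range (Y * fromRows B₁ B₂).mulVecLin =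
      LinearMap.range (Y.toCols₁ + Y.toCols₂ * Δ).mulVecLin := by
  conv_lhs => rw [← fromCols_toCols Y]
  rw [fromCols_mul_fromRows, ← hΔ, ← Matrix.mul_assoc, ← Matrix.add_mul,
    range_mulVecLin_mul_of_isUnit _ hB₁]

theorem isUnit_diagonal_mul_vandermonde {K : Type*} [Field K] {k : ℕ} {d v : Fin k → K}
    (hd : ∀ i, d i ≠ 0) (hv : Function.Injective v) : IsUnit (diagonal d * vandermonde v) := by
  rw [isUnit_iff_isUnit_det, det_mul, det_diagonal, IsUnit.mul_iff, isUnit_iff_ne_zero,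
    isUnit_iff_ne_zero, det_vandermonde_ne_zero_iff]
  exact ⟨Finset.prod_ne_zero_iff.2 fun i _ => hd i, hv⟩

theorem isUnit_diagonal_mul_even_pow_of_strictAnti {k : ℕ} {σ c : Fin k → ℝ} (hσ : StrictAnti σ)
    (hσpos : ∀ i, 0 < σ i) (hc : ∀ i, c i ≠ 0) :
    IsUnit (diagonal (fun i => σ i * c i) * of fun i j : Fin k => σ i ^ (2 * (j : ℕ))) := by
  have hV : (of fun i j : Fin k => σ i ^ (2 * (j : ℕ))) = vandermonde fun i => σ i ^ 2 := by
    ext i j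
    simp [vandermonde_apply, pow_mul]
  rw [hV]
  refine isUnit_diagonal_mul_vandermonde (fun i => mul_ne_zero (hσpos i).ne' (hc i))
    (StrictAnti.injective fun i j hij => ?_)
  exact pow_lt_pow_left₀ (hσ hij) (hσpos j).le two_ne_zero

theorem mul_inv_mul_inv_mul_mul_cancel {R k l : Type*} [CommRing R] [Fintype k] [DecidableEq k]
    (B : Matrix l k R) {D H : Matrix k k R} (hDH : IsUnit (D * H)) :
    B * H⁻¹ * D⁻¹ * (D * H) = B := by
  rw [Matrix.mul_assoc B, ← Matrix.mul_inv_rev, Matrix.mul_assoc,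
    nonsing_inv_mul _ ((isUnit_iff_isUnit_det _).1 hDH), Matrix.mul_one]

theorem span_mulVec_diagonal_pow_eq_range {m n r : ℕ} (k : ℕ) (Zr : Matrix (Fin n) (Fin r) ℝ)
    (s : Fin r → ℝ) (U : Matrix (Fin r) (Fin m) ℝ) (L : Matrix (Fin m) (Fin m) ℝ)
    (b : Fin m → ℝ) :
    Submodule.span ℝ {w | ∃ i, i < k ∧ w = (Zr * diagonal s ^ (2 * i + 1) * U * L) *ᵥ b} =
      LinearMap.range (Zr * of fun j (i : Fin k) =>
        s j ^ (2 * (i : ℕ) + 1) * (U *ᵥ (L *ᵥ b)) j).mulVecLin := by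
  set K : Matrix (Fin r) (Fin k) ℝ := of fun j i => s j ^ (2 * (i : ℕ) + 1) * (U *ᵥ (L *ᵥ b)) j
  have hcol (i : Fin k) :
      (Zr * K).col i = (Zr * diagonal s ^ (2 * (i : ℕ) + 1) * U * L) *ᵥ b := by
    rw [← mulVec_single_one, ← mulVec_mulVec, ← mulVec_mulVec, ← mulVec_mulVec, ← mulVec_mulVec,
      diagonal_pow]
    congr 1
    ext j
    simp [K, mulVec_diagonal]
  have hset : {w | ∃ i, i < k ∧ w = (Zr * diagonal s ^ (2 * i + 1) * U * L) *ᵥ b} =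
      Set.range (Zr * K).col := by
    ext w
    constructor
    · rintro ⟨i, hi, rfl⟩
      exact ⟨⟨i, hi⟩, hcol ⟨i, hi⟩⟩
    · rintro ⟨i, rfl⟩
      exact ⟨i, i.2, hcol i⟩
  rw [hset, range_mulVecLin]

theorem dist_solution_subspace_general {m n : ℕ} (r k : ℕ)
    (hk1 : 1 ≤ k) (hkr : k ≤ r) (hrm : r ≤ m) (hrn : r ≤ n)
    (b : Fin m → ℝ)
    (N : Matrix (Fin n) (Fin n) ℝ)
    (LM : Matrix (Fin m) (Fin m) ℝ)
    (UA : Matrix (Fin m) (Fin m) ℝ)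
    (Z : Matrix (Fin n) (Fin n) ℝ) (hZN : Zᵀ * N⁻¹ * Z = 1)
    (σ : ℕ → ℝ)
    (hσpos : ∀ i, i < r → 0 < σ i)
    (hσdistinct : ∀ i j, i < j → j < r → σ j < σ i)
    -- Fourier coefficients c_i = u_{A,i}ᵀ L_M b, assumed nonzero for 1 ≤ i ≤ r
    (c : ℕ → ℝ)
    (hc : ∀ i : Fin r, c (i : ℕ) = UAᵀ (Fin.castLE hrm i) ⬝ᵥ (LM *ᵥ b))
    (hcne : ∀ i, i < r → c i ≠ 0)
    -- the partitioned diagonal matrix D = diag(σ_i c_i) and Vandermonde-type blocks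
    (D₁ : Matrix (Fin k) (Fin k) ℝ)
    (hD₁ : D₁ = Matrix.diagonal fun i : Fin k => σ (i : ℕ) * c (i : ℕ))
    (D₂ : Matrix (Fin (r - k)) (Fin (r - k)) ℝ)
    (hD₂ : D₂ = Matrix.diagonal fun i : Fin (r - k) => σ (k + (i : ℕ)) * c (k + (i : ℕ)))
    (H₁ : Matrix (Fin k) (Fin k) ℝ)
    (hH₁ : H₁ = Matrix.of fun i j : Fin k => σ (i : ℕ) ^ (2 * (j : ℕ)))
    (H₂ : Matrix (Fin (r - k)) (Fin k) ℝ)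
    (hH₂ : H₂ = Matrix.of fun (i : Fin (r - k)) (j : Fin k) => σ (k + (i : ℕ)) ^ (2 * (j : ℕ)))
    (Δk : Matrix (Fin (r - k)) (Fin k) ℝ)
    (hΔk : Δk = D₂ * H₂ * H₁⁻¹ * D₁⁻¹)
    -- the first r columns of Z and U_A, and D_A = diag(σ_1,…,σ_r)
    (Zr : Matrix (Fin n) (Fin r) ℝ) (hZr : Zr = Z.submatrix id (Fin.castLE hrn))
    (UAr : Matrix (Fin m) (Fin r) ℝ) (hUAr : UAr = UA.submatrix id (Fin.castLE hrm))
    (DA : Matrix (Fin r) (Fin r) ℝ)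
    (hDA : DA = Matrix.diagonal fun i : Fin r => σ (i : ℕ))
    -- the k-th gen-GKB solution subspace S_k and the ideal subspace Z_k
    (Sk : Submodule ℝ (Fin n → ℝ))
    (hSk : Sk = Submodule.span ℝ {w : Fin n → ℝ | ∃ i, i < k ∧
      w = (Zr * DA ^ (2 * i + 1) * UArᵀ * LM) *ᵥ b})
    (Zk : Submodule ℝ (Fin n → ℝ))
    (hZk : Zk = Submodule.span ℝ
      (Set.range fun i : Fin k => Zᵀ (Fin.castLE (hkr.trans hrn) i))) :
    subspaceDist N⁻¹ Sk Zk =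
      matSpectralNorm Δk / Real.sqrt (1 + matSpectralNorm Δk ^ 2) := by
  have : NeZero k := ⟨by omega⟩
  let φ : Fin k ⊕ Fin (r - k) ≃ Fin r :=
    finSumFinEquiv.trans (finCongr (Nat.add_sub_cancel' hkr))
  set Y := Zr.submatrix id φ with hY
  have hYorth : Yᵀ * N⁻¹ * Y = 1 := by
    rw [hY, hZr, submatrix_submatrix]
    exact transpose_submatrix_mul_mul_submatrix_eq_one hZN
      ((Fin.castLE_injective hrn).comp φ.injective)
  have hDH : IsUnit (D₁ * H₁) := by
    rw [hD₁, hH₁]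
    exact isUnit_diagonal_mul_even_pow_of_strictAnti (fun i j hij => hσdistinct i j hij (by omega))
      (fun i => hσpos i (by omega)) (fun i => hcne i (by omega))
  have hΔ : Δk * (D₁ * H₁) = D₂ * H₂ := hΔk ▸ mul_inv_mul_inv_mul_mul_cancel _ hDH
  have hK : (of fun (j : Fin r) (i : Fin k) =>
      σ j ^ (2 * (i : ℕ) + 1) * (UArᵀ *ᵥ (LM *ᵥ b)) j).submatrix φ id =
        fromRows (D₁ * H₁) (D₂ * H₂) := by
    have hcb : UArᵀ *ᵥ (LM *ᵥ b) = fun j : Fin r => c j := by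
      ext j; rw [hc, hUAr]; rfl
    rw [hcb]
    ext (j | j) i <;> simp [φ, hD₁, hH₁, hD₂, hH₂, diagonal_mul] <;> ring
  have hS : Sk = LinearMap.range (Y.toCols₁ + Y.toCols₂ * Δk).mulVecLin := by
    rw [hSk, hDA, span_mulVec_diagonal_pow_eq_range, ← submatrix_id_id (Zr * _),
      ← submatrix_mul_equiv Zr _ id φ id, ← hY, hK, range_mulVecLin_mul_fromRows _ hDH hΔ]
  have hZ : Zk = LinearMap.range Y.toCols₁.mulVecLin := by
    rw [hZk, range_mulVecLin]
    congr 2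
    ext i j
    simp [Y, hZr, φ, col_apply]
    rfl
  rw [subspaceDist, hS, hZ, maxCanonicalAngle_range_toCols_add_mul hYorth, Real.sin_arctan]

/-- Under the GSVD setup with distinct generalized singular values and
nonvanishing Fourier coefficients, the distance between the `k`-th gen-GKB solution
subspace `S_k` and `Z_k = span{z_1,…,z_k}` equals `‖Δ_k‖₂ / (1 + ‖Δ_k‖₂²)^{1/2}`. -/
theorem dist_solution_subspace {m n : ℕ} (r k : ℕ)
    (hk1 : 1 ≤ k) (hkr : k ≤ r) (hrm : r ≤ m) (hrn : r ≤ n)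
    (A : Matrix (Fin m) (Fin n) ℝ) (b : Fin m → ℝ)
    (M : Matrix (Fin m) (Fin m) ℝ) (N : Matrix (Fin n) (Fin n) ℝ)
    (hM : M.PosDef) (hN : N.PosDef)
    (LM : Matrix (Fin m) (Fin m) ℝ) (LN : Matrix (Fin n) (Fin n) ℝ)
    (hLM : IsUnit LM.det) (hLN : IsUnit LN.det)
    (hLMM : LMᵀ * LM = M⁻¹) (hLNN : LNᵀ * LN = N⁻¹)
    (UA : Matrix (Fin m) (Fin m) ℝ) (hUA : UAᵀ * UA = 1)
    (Z : Matrix (Fin n) (Fin n) ℝ) (hZ : IsUnit Z.det) (hZN : Zᵀ * N⁻¹ * Z = 1)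
    (σ : ℕ → ℝ)
    (hσpos : ∀ i, i < r → 0 < σ i) (hσlt1 : ∀ i, i < r → σ i < 1)
    (hσdistinct : ∀ i j, i < j → j < r → σ j < σ i)
    (SigA : Matrix (Fin m) (Fin n) ℝ)
    (hSigA : ∀ (i : Fin m) (j : Fin n),
      SigA i j = if (i : ℕ) = (j : ℕ) ∧ (i : ℕ) < r then σ (i : ℕ) else 0)
    (hgsvd : LM * A = UA * SigA * Z⁻¹)
    -- Fourier coefficients c_i = u_{A,i}ᵀ L_M b, assumed nonzero for 1 ≤ i ≤ r
    (c : ℕ → ℝ)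
    (hc : ∀ i : Fin r, c (i : ℕ) = UAᵀ (Fin.castLE hrm i) ⬝ᵥ (LM *ᵥ b))
    (hcne : ∀ i, i < r → c i ≠ 0)
    -- the partitioned diagonal matrix D = diag(σ_i c_i) and Vandermonde-type blocks
    (D₁ : Matrix (Fin k) (Fin k) ℝ)
    (hD₁ : D₁ = Matrix.diagonal fun i : Fin k => σ (i : ℕ) * c (i : ℕ))
    (D₂ : Matrix (Fin (r - k)) (Fin (r - k)) ℝ)
    (hD₂ : D₂ = Matrix.diagonal fun i : Fin (r - k) => σ (k + (i : ℕ)) * c (k + (i : ℕ)))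
    (H₁ : Matrix (Fin k) (Fin k) ℝ)
    (hH₁ : H₁ = Matrix.of fun i j : Fin k => σ (i : ℕ) ^ (2 * (j : ℕ)))
    (H₂ : Matrix (Fin (r - k)) (Fin k) ℝ)
    (hH₂ : H₂ = Matrix.of fun (i : Fin (r - k)) (j : Fin k) => σ (k + (i : ℕ)) ^ (2 * (j : ℕ)))
    (Δk : Matrix (Fin (r - k)) (Fin k) ℝ)
    (hΔk : Δk = D₂ * H₂ * H₁⁻¹ * D₁⁻¹)
    -- the first r columns of Z and U_A, and D_A = diag(σ_1,…,σ_r)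
    (Zr : Matrix (Fin n) (Fin r) ℝ) (hZr : Zr = Z.submatrix id (Fin.castLE hrn))
    (UAr : Matrix (Fin m) (Fin r) ℝ) (hUAr : UAr = UA.submatrix id (Fin.castLE hrm))
    (DA : Matrix (Fin r) (Fin r) ℝ)
    (hDA : DA = Matrix.diagonal fun i : Fin r => σ (i : ℕ))
    -- the k-th gen-GKB solution subspace S_k and the ideal subspace Z_k
    (Sk : Submodule ℝ (Fin n → ℝ))
    (hSk : Sk = Submodule.span ℝ {w : Fin n → ℝ | ∃ i, i < k ∧
      w = (Zr * DA ^ (2 * i + 1) * UArᵀ * LM) *ᵥ b})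
    (Zk : Submodule ℝ (Fin n → ℝ))
    (hZk : Zk = Submodule.span ℝ
      (Set.range fun i : Fin k => Zᵀ (Fin.castLE (hkr.trans hrn) i))) :
    subspaceDist N⁻¹ Sk Zk =
      matSpectralNorm Δk / Real.sqrt (1 + matSpectralNorm Δk ^ 2) :=
  dist_solution_subspace_general r k hk1 hkr hrm hrn b N LM UA Z hZN σ hσpos hσdistinct c hc hcne D₁
    hD₁ D₂ hD₂ H₁ hH₁ H₂ hH₂ Δk hΔk Zr hZr UAr hUAr DA hDA Sk hSk Zk hZk
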